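/- Let A = [[1,1],[0,1]] and B = [[1,0],[-u²,1]] in SL(2,ℂ). Then trace(A·B) = 2 − u² = −1/u = 2·cos(3π/5), and the class [A·B] has order 5 in PSL(2,ℂ). -/
import Mathlib


/-!
Setup: `PSL(2,ℂ)` as the quotient of `SL(2,ℂ)` by its center, the constants
`u = (1+√5)/2`, `ω = (1+√(-3))/2 = (1+√3·i)/2`, and the generators of the
tetrahedral groups of Neumann–Reid.
-/

noncomputable section

abbrev SL2C := Matrix.SpecialLinearGroup (Fin 2) ℂ

/-- `PSL(2,ℂ)`, the quotient of `SL(2,ℂ)` by its center `{±I}`. -/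
abbrev PSL2C := SL2C ⧸ Subgroup.center SL2C

/-- The projection `SL(2,ℂ) → PSL(2,ℂ)`, `A ↦ [A]`. -/
def pr : SL2C →* PSL2C := QuotientGroup.mk' _

def u : ℂ := ((1 + Real.sqrt 5) / 2 : ℝ)
def ω : ℂ := (1 + Real.sqrt 3 * Complex.I) / 2

lemma u_ne : u ≠ 0 := Complex.ofReal_ne_zero.mpr (by positivity)

lemma ω_ne : ω ≠ 0 := by
  unfold ω
  intro h
  rw [div_eq_zero_iff] at h
  rcases h with h | h
  · have := congrArg Complex.re h
    simp at this
  · norm_num at h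

def A : SL2C := ⟨!![1, 1; 0, 1], by simp [Matrix.det_fin_two_of]⟩
def B : SL2C := ⟨!![1, 0; -u ^ 2, 1], by simp [Matrix.det_fin_two_of]⟩

lemma hs5 : (Real.sqrt 5 : ℝ) ^ 2 = 5 := Real.sq_sqrt (by norm_num)

lemma hu : u ^ 2 = u + 1 := by
  have h : ((1 + Real.sqrt 5) / 2 : ℝ) ^ 2 = (1 + Real.sqrt 5) / 2 + 1 := by nlinarith [hs5]
  unfold u; exact_mod_cast h

lemma hcos : Real.cos (3 * Real.pi / 5) = (1 - Real.sqrt 5) / 4 := by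
  have h3 : 3 * Real.pi / 5 = Real.pi - 2 * (Real.pi / 5) := by ring
  rw [h3, Real.cos_pi_sub, Real.cos_two_mul, Real.cos_pi_div_five]
  nlinarith [hs5]

lemma hAB : ((A * B : SL2C) : Matrix (Fin 2) (Fin 2) ℂ) = !![1 - u ^ 2, 1; -u ^ 2, 1] := by
  rw [Matrix.SpecialLinearGroup.coe_mul]
  show (!![1, 1; 0, 1] : Matrix (Fin 2) (Fin 2) ℂ) * !![1, 0; -u ^ 2, 1] = _
  rw [Matrix.mul_fin_two]; ring_nf

lemma hM5 : (A * B : SL2C) ^ 5 = -1 := by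
  ext i j
  rw [Matrix.SpecialLinearGroup.coe_pow, hAB]
  have h1 : ((-1 : SL2C) : Matrix (Fin 2) (Fin 2) ℂ) = !![-1,0;0,-1] := by
    rw [Matrix.SpecialLinearGroup.coe_neg]
    ext a b; fin_cases a <;> fin_cases b <;> simp
  rw [h1, show (5:ℕ) = 4+1 from rfl, pow_succ, show (4:ℕ)=3+1 from rfl, pow_succ,
    show (3:ℕ)=2+1 from rfl, pow_succ, sq, Matrix.mul_fin_two, Matrix.mul_fin_two,
    Matrix.mul_fin_two, Matrix.mul_fin_two]
  fin_cases i <;> fin_cases j <;> simp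
  · linear_combination (-u^8 - u^7 + 7*u^6 + 6*u^5 - 15*u^4 - 9*u^3 + 11*u^2 + 2*u - 2) * hu
  · linear_combination (u^6 + u^5 - 6*u^4 - 5*u^3 + 10*u^2 + 5*u - 5) * hu
  · linear_combination (-u^8 - u^7 + 6*u^6 + 5*u^5 - 10*u^4 - 5*u^3 + 5*u^2) * hu
  · linear_combination (u^6 + u^5 - 5*u^4 - 4*u^3 + 6*u^2 + 2*u - 2) * hu

lemma neg_one_mem_center : (-1 : SL2C) ∈ Subgroup.center SL2C := by
  rw [Subgroup.mem_center_iff]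
  intro g; ext i j
  simp [Matrix.mul_neg, Matrix.neg_mul]

/-- `trace(A·B) = 2 − u² = −1/u = 2cos(3π/5)` and `[A·B]` has order 5 in `PSL(2,ℂ)`. -/
theorem stmt7 :
    Matrix.trace ((A * B : SL2C) : Matrix (Fin 2) (Fin 2) ℂ) = 2 - u ^ 2 ∧
    (2 - u ^ 2 : ℂ) = -1 / u ∧
    (-1 / u : ℂ) = ((2 * Real.cos (3 * Real.pi / 5) : ℝ) : ℂ) ∧
    orderOf (pr (A * B)) = 5 := by
  refine ⟨?_, ?_, ?_, ?_⟩
  · rw [hAB, Matrix.trace_fin_two_of]; ring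
  · field_simp [u_ne]
    linear_combination (-u - 1) * hu
  · rw [hcos]
    have : (-1 / u : ℂ) = 1 - u := by
      field_simp [u_ne]
      linear_combination hu
    rw [this]
    unfold u
    push_cast
    ring_nf
  · have h5 : (pr (A * B)) ^ 5 = 1 := by
      rw [← map_pow, hM5]
      exact (QuotientGroup.eq_one_iff _).mpr neg_one_mem_center
    have hne : pr (A * B) ≠ 1 := by
      rw [Ne, pr, QuotientGroup.mk'_apply, QuotientGroup.eq_one_iff, Subgroup.mem_center_iff]
      intro h
      have := h A
      have h2 := congrArg (fun (g : SL2C) => (g : Matrix (Fin 2) (Fin 2) ℂ) 0 0) this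
      have hA : ((A : SL2C) : Matrix (Fin 2) (Fin 2) ℂ) = !![1,1;0,1] := rfl
      have hB : ((B : SL2C) : Matrix (Fin 2) (Fin 2) ℂ) = !![1,0;-u^2,1] := rfl
      simp only [Matrix.SpecialLinearGroup.coe_mul, hA, hB, Matrix.mul_fin_two] at h2
      simp at h2
      exact u_ne h2
    have hd : orderOf (pr (A * B)) ∣ 5 := orderOf_dvd_of_pow_eq_one h5
    rcases (Nat.Prime.eq_one_or_self_of_dvd (by norm_num) _ hd) with h | h
    · exact absurd (orderOf_eq_one_iff.mp h) hne
    · exact h
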